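/- Let M₁ be a DFA with m states and M₂ a DFA with n states over the same alphabet, where m, n ≥ 2. If L(M₁)⁺ ∩ L(M₂)⁺ is nonempty, then the shortest string in L(M₁)⁺ ∩ L(M₂)⁺ has length strictly less than m·n − 1. -/

import Mathlib

/-- The positive closure `L⁺ = ⋃_{k ≥ 1} L^k` of a language. -/
def posClosure {α : Type*} (L : Language α) : Language α :=
  {x | ∃ k : ℕ, 1 ≤ k ∧ x ∈ L ^ k}

/-!
`L(M)⁺` is accepted by the NFA on the states of `M` that may also, from an accepting state,
restart `M` by taking a first step from the start state. In the product `P` of the two such NFAs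
a shortest accepted word has length at most `mn - 1`, and equality forces its run to be a
Hamiltonian geodesic: the distance from the start is a bijection from the `mn` product states
onto `0, …, mn - 1`. Then the first `n` states of the run lie in distinct columns and the
first `m` in distinct rows.

Suppose the start `s₂` of `M₂` is rejecting and let `u` be the state among the first `n` in the
column of the accepting state. Since `M₂` may restart from `u.2`, every successor of `(u.1, s₂)` is one
of `u`, so `(u.1, s₂)` comes no later than `u` on the run; being in the column of the start it
is the start, so `u.1 = s₁`. Hence `s₁` is rejecting (else `u` would be an early accepting
state) and `m < n` (else `u` would share a row with the start). Exchanging the automata, if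
either start state rejects then both do and `m < n < m`; if both accept, the empty word is a
common word.
-/

namespace DFA

variable {α σ : Type*} (M : DFA α σ)

def plusNFA : NFA α σ where
  step p a := {q | q = M.step p a ∨ (p ∈ M.accept ∧ q = M.step M.start a)}
  start := {M.start}
  accept := M.accept

variable {M}

theorem plusNFA_step_start_subset {q : σ} (hq : q ∈ M.accept) (a : α) :
    M.plusNFA.step M.start a ⊆ M.plusNFA.step q a := by
  rintro r (hr | ⟨-, hr⟩) <;> exact Or.inr ⟨hq, hr⟩

theorem evalFrom_mem_plusNFA_evalFrom (p : σ) (x : List α) :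
    M.evalFrom p x ∈ M.plusNFA.evalFrom {p} x := by
  induction x generalizing p with
  | nil => rfl
  | cons a x ih =>
    rw [NFA.evalFrom_cons, NFA.stepSet_singleton, NFA.mem_evalFrom_iff_exists]
    exact ⟨M.step p a, Or.inl rfl, ih _⟩

theorem eval_mem_plusNFA_evalFrom {p : σ} (hp : p ∈ M.accept) {x : List α} (hx : x ≠ []) :
    M.eval x ∈ M.plusNFA.evalFrom {p} x := by
  obtain ⟨a, x, rfl⟩ := List.exists_cons_of_ne_nil hx
  rw [NFA.evalFrom_cons, NFA.stepSet_singleton, NFA.mem_evalFrom_iff_exists]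
  exact ⟨M.step M.start a, Or.inr ⟨hp, rfl⟩, evalFrom_mem_plusNFA_evalFrom _ x⟩

theorem exists_mem_accept_plusNFA_eval_of_mem_pow {x : List α} (k : ℕ)
    (hx : x ∈ M.accepts ^ (k + 1)) : ∃ v ∈ M.accept, v ∈ M.plusNFA.eval x := by
  induction k generalizing x with
  | zero => exact ⟨M.eval x, by rwa [zero_add, pow_one] at hx, evalFrom_mem_plusNFA_evalFrom _ x⟩
  | succ k ih =>
    obtain ⟨y, hy, z, hz, rfl⟩ := Language.mem_mul.1 (pow_succ M.accepts (k + 1) ▸ hx)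
    obtain ⟨v, hv, hvy⟩ := ih hy
    rcases eq_or_ne z [] with rfl | hz₀
    · exact ⟨v, hv, by simpa using hvy⟩
    refine ⟨M.eval z, hz, ?_⟩
    rw [NFA.eval, NFA.evalFrom_append, NFA.mem_evalFrom_iff_exists]
    exact ⟨v, hvy, eval_mem_plusNFA_evalFrom hv hz₀⟩

theorem exists_mem_acceptsFrom_mul_pow {p v : σ} {x : List α}
    (hv : v ∈ M.plusNFA.evalFrom {p} x) (hacc : v ∈ M.accept) :
    ∃ k, x ∈ M.acceptsFrom p * M.accepts ^ k := by
  induction x generalizing p with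
  | nil =>
    refine ⟨0, Language.mem_mul.2 ⟨[], ?_, [], by simp [Language.mem_one], rfl⟩⟩
    rw [NFA.evalFrom_nil, Set.mem_singleton_iff] at hv
    exact hv ▸ hacc
  | cons a x ih =>
    rw [NFA.evalFrom_cons, NFA.stepSet_singleton, NFA.mem_evalFrom_iff_exists] at hv
    obtain ⟨q, hq, hvq⟩ := hv
    obtain ⟨k, y, hy, z, hz, rfl⟩ := ih hvq
    rcases hq with rfl | ⟨hp, rfl⟩
    · exact ⟨k, a :: y, hy, z, hz, rfl⟩
    · refine ⟨k + 1, [], hp, a :: y ++ z, ?_, rfl⟩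
      rw [pow_succ']
      exact ⟨a :: y, hy, z, hz, rfl⟩

theorem accepts_plusNFA : M.plusNFA.accepts = posClosure M.accepts := by
  ext x
  constructor
  · rintro ⟨v, hacc, hv⟩
    obtain ⟨k, hx⟩ := exists_mem_acceptsFrom_mul_pow hv hacc
    exact ⟨k + 1, by omega, pow_succ' M.accepts k ▸ hx⟩
  · rintro ⟨_ | k, hk, hx⟩
    · omega
    · exact exists_mem_accept_plusNFA_eval_of_mem_pow k hx

end DFA

namespace NFA

section Inter

variable {α σ₁ σ₂ : Type*}

def inter (N₁ : NFA α σ₁) (N₂ : NFA α σ₂) : NFA α (σ₁ × σ₂) where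
  step u a := N₁.step u.1 a ×ˢ N₂.step u.2 a
  start := N₁.start ×ˢ N₂.start
  accept := N₁.accept ×ˢ N₂.accept

variable {N₁ : NFA α σ₁} {N₂ : NFA α σ₂}

theorem stepSet_inter (S₁ : Set σ₁) (S₂ : Set σ₂) (a : α) :
    (N₁.inter N₂).stepSet (S₁ ×ˢ S₂) a = N₁.stepSet S₁ a ×ˢ N₂.stepSet S₂ a := by
  ext ⟨p, q⟩
  simp only [mem_stepSet, Set.mem_prod, inter, Prod.exists]
  constructor
  · rintro ⟨p', q', ⟨hp', hq'⟩, hp, hq⟩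
    exact ⟨⟨p', hp', hp⟩, ⟨q', hq', hq⟩⟩
  · rintro ⟨⟨p', hp', hp⟩, ⟨q', hq', hq⟩⟩
    exact ⟨p', q', ⟨hp', hq'⟩, hp, hq⟩

theorem evalFrom_inter (S₁ : Set σ₁) (S₂ : Set σ₂) (x : List α) :
    (N₁.inter N₂).evalFrom (S₁ ×ˢ S₂) x = N₁.evalFrom S₁ x ×ˢ N₂.evalFrom S₂ x := by
  induction x generalizing S₁ S₂ with
  | nil => rfl
  | cons a x ih => simp only [evalFrom_cons, stepSet_inter, ih]

theorem accepts_inter : (N₁.inter N₂).accepts = N₁.accepts ⊓ N₂.accepts := by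
  ext x
  simp only [Language.mem_inf, mem_accepts]
  rw [show (N₁.inter N₂).start = N₁.start ×ˢ N₂.start from rfl, evalFrom_inter]
  simp only [inter, Set.mem_prod, Prod.exists]
  constructor
  · rintro ⟨p, q, ⟨hp, hq⟩, hp', hq'⟩
    exact ⟨⟨p, hp, hp'⟩, ⟨q, hq, hq'⟩⟩
  · rintro ⟨⟨p, hp, hp'⟩, ⟨q, hq, hq'⟩⟩
    exact ⟨p, q, ⟨hp, hq⟩, hp', hq'⟩

end Inter

section Dist

variable {α σ : Type*} (N : NFA α σ)

def Reachable (v : σ) : Prop :=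
  ∃ x, v ∈ N.eval x

/-- Junk value `0` when `v` is unreachable. -/
noncomputable def dist (v : σ) : ℕ :=
  sInf (List.length '' {x | v ∈ N.eval x})

variable {N} {v w : σ}

theorem dist_le_length {x : List α} (hx : v ∈ N.eval x) : N.dist v ≤ x.length :=
  Nat.sInf_le ⟨x, hx, rfl⟩

theorem dist_eq_zero_of_mem_start (hv : v ∈ N.start) : N.dist v = 0 :=
  Nat.le_zero.1 (dist_le_length (x := []) hv)

theorem Reachable.exists_length_eq_dist (hv : N.Reachable v) :
    ∃ x, x.length = N.dist v ∧ v ∈ N.eval x := by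
  obtain ⟨x, hx⟩ := hv
  obtain ⟨y, hy, hlen⟩ : N.dist v ∈ List.length '' {x | v ∈ N.eval x} :=
    Nat.sInf_mem ⟨x.length, x, hx, rfl⟩
  exact ⟨y, hlen, hy⟩

theorem dist_le_dist_add (hv : N.Reachable v) {y : List α} (hw : w ∈ N.evalFrom {v} y) :
    N.dist w ≤ N.dist v + y.length := by
  obtain ⟨x, hlen, hx⟩ := hv.exists_length_eq_dist
  have hxy : w ∈ N.eval (x ++ y) := by
    rw [eval, evalFrom_append, mem_evalFrom_iff_exists]
    exact ⟨v, hx, hw⟩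
  simpa [hlen] using dist_le_length hxy

theorem dist_le_dist_add_one (hv : N.Reachable v) {a : α} (hw : w ∈ N.step v a) :
    N.dist w ≤ N.dist v + 1 :=
  dist_le_dist_add hv (y := [a]) (by rwa [evalFrom_singleton, stepSet_singleton])

theorem Reachable.exists_dist_eq (hw : N.Reachable w) {j : ℕ} (hj : j ≤ N.dist w) :
    ∃ v, N.Reachable v ∧ N.dist v = j ∧
      ∃ y : List α, y.length = N.dist w - j ∧ w ∈ N.evalFrom {v} y := by
  obtain ⟨x, hlen, hx⟩ := hw.exists_length_eq_dist
  rw [eval, ← List.take_append_drop j x, evalFrom_append, mem_evalFrom_iff_exists] at hx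
  obtain ⟨v, hv, hwv⟩ := hx
  have hvj : N.dist v ≤ j := by simpa [hlen, hj] using dist_le_length hv
  have hwv' : N.dist w ≤ N.dist v + (N.dist w - j) := by
    simpa [hlen] using dist_le_dist_add ⟨_, hv⟩ hwv
  exact ⟨v, ⟨_, hv⟩, by omega, _, by simp [hlen], hwv⟩

theorem Reachable.exists_step_of_dist_eq_succ (hw : N.Reachable w) {k : ℕ}
    (hk : N.dist w = k + 1) : ∃ v a, N.dist v = k ∧ w ∈ N.step v a := by
  obtain ⟨v, -, hv, y, hy, hwv⟩ := hw.exists_dist_eq (j := k) (by omega)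
  obtain ⟨a, rfl⟩ := List.length_eq_one_iff.1 (by omega : y.length = 1)
  exact ⟨v, a, hv, by rwa [evalFrom_singleton, stepSet_singleton] at hwv⟩

theorem le_dist_of_mem_accept {n : ℕ} (hlong : ∀ x ∈ N.accepts, n ≤ x.length)
    (hv : N.Reachable v) (hacc : v ∈ N.accept) : n ≤ N.dist v := by
  obtain ⟨x, hlen, hx⟩ := hv.exists_length_eq_dist
  exact hlen ▸ hlong x ⟨v, hacc, hx⟩

end Dist

end NFA

theorem Finset.eq_range_card_of_succ_mem {s : Finset ℕ} (h : ∀ k, k + 1 ∈ s → k ∈ s) :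
    s = Finset.range s.card := by
  have hlt : ∀ k ∈ s, k < s.card := fun k hk => by
    have hsub : Finset.range (k + 1) ⊆ s := fun j hj =>
      Nat.decreasingInduction (fun i _ hi => h i hi) hk (Nat.lt_succ_iff.1 (Finset.mem_range.1 hj))
    simpa using Finset.card_le_card hsub
  exact Finset.eq_of_subset_of_card_le (fun k hk => Finset.mem_range.2 (hlt k hk)) (by simp)

namespace NFA

variable {α σ : Type*} {N : NFA α σ}

theorem reachable_injective_range_dist [Fintype σ] (hne : N.accepts.Nonempty)
    (hlong : ∀ x ∈ N.accepts, Fintype.card σ - 1 ≤ x.length) :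
    (∀ v, N.Reachable v) ∧ Function.Injective N.dist ∧
      Set.range N.dist = Set.Iio (Fintype.card σ) := by
  classical
  obtain ⟨x, f, hf, hfx⟩ := hne
  have hfr : N.Reachable f := ⟨x, hfx⟩
  have hfd := le_dist_of_mem_accept hlong hfr hf
  set R := Finset.univ.filter N.Reachable
  have hsub : Finset.range (Fintype.card σ) ⊆ R.image N.dist := fun j hj => by
    obtain ⟨v, hv, hvj, -⟩ := hfr.exists_dist_eq (j := j) (by simp at hj; omega)
    exact Finset.mem_image.2 ⟨v, by simpa [R] using hv, hvj⟩
  have h₁ := Finset.card_le_card hsub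
  have h₂ : (R.image N.dist).card ≤ R.card := Finset.card_image_le
  have h₃ := Finset.card_le_univ R
  rw [Finset.card_range] at h₁
  have hR : R = Finset.univ := Finset.eq_univ_of_card R (by omega)
  have hinj : Set.InjOn N.dist R := Finset.card_image_iff.1 (by omega)
  have himage : R.image N.dist = Finset.range (Fintype.card σ) :=
    (Finset.eq_of_subset_of_card_le hsub (by simp; omega)).symm
  have hreach : ∀ v, N.Reachable v := fun v => by
    have hv : v ∈ R := hR ▸ Finset.mem_univ v
    simpa [R] using hv
  rw [hR] at hinj himage
  refine ⟨hreach, fun u v h => hinj (by simp) (by simp) h, ?_⟩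
  simpa using congrArg ((↑) : Finset ℕ → Set ℕ) himage

/-- The first level met by a fibre of `π` is a distance in the quotient automaton, so these
levels are `card B` distinct numbers closed under predecessor, i.e. exactly `0, …, card B - 1`. -/
theorem existsUnique_dist_lt_card_fiber {B : Type*} [Fintype B] {π : σ → B}
    (hπ : Function.Surjective π)
    (hsim : ∀ u a v t, v ∈ N.step u a → π t = π u → ∃ w ∈ N.step t a, π w = π v)
    (hreach : ∀ v, N.Reachable v) (hinj : Function.Injective N.dist) (b : B) :
    ∃! u, N.dist u < Fintype.card B ∧ π u = b := by
  classical
  let f : B → ℕ := fun b => sInf (N.dist '' (π ⁻¹' {b}))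
  have hf_le : ∀ u, f (π u) ≤ N.dist u := fun u => Nat.sInf_le ⟨u, rfl, rfl⟩
  have hf_mem : ∀ b, ∃ u, π u = b ∧ N.dist u = f b := fun b => by
    obtain ⟨u, hu⟩ := hπ b
    exact Nat.sInf_mem (s := N.dist '' (π ⁻¹' {b})) ⟨_, u, hu, rfl⟩
  have hf_inj : Function.Injective f := fun b b' h => by
    obtain ⟨u, rfl, hu⟩ := hf_mem b
    obtain ⟨u', rfl, hu'⟩ := hf_mem b'
    rw [hinj (hu.trans (h.trans hu'.symm))]
  have hf_pred : ∀ b k, f b = k + 1 → ∃ b', f b' = k := fun b k hk => by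
    obtain ⟨u, rfl, hu⟩ := hf_mem b
    obtain ⟨v, a, hv, huv⟩ := (hreach u).exists_step_of_dist_eq_succ (hu.trans hk)
    obtain ⟨t, ht, htd⟩ := hf_mem (π v)
    obtain ⟨w, hw, hπw⟩ := hsim v a u t huv ht
    have := hf_le w
    have := hf_le v
    have := dist_le_dist_add_one (hreach t) hw
    exact ⟨π v, by rw [hπw] at *; omega⟩
  have himage : Finset.univ.image f = Finset.range (Fintype.card B) := by
    have := Finset.eq_range_card_of_succ_mem (s := Finset.univ.image f) fun k hk => by
      obtain ⟨b, -, hb⟩ := Finset.mem_image.1 hk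
      obtain ⟨b', hb'⟩ := hf_pred b k hb
      exact Finset.mem_image.2 ⟨b', Finset.mem_univ _, hb'⟩
    rwa [Finset.card_image_of_injective _ hf_inj, Finset.card_univ] at this
  have hf_lt : ∀ b, f b < Fintype.card B := fun b =>
    Finset.mem_range.1 (himage ▸ Finset.mem_image_of_mem f (Finset.mem_univ b))
  have hlevel : ∀ u, N.dist u < Fintype.card B → N.dist u = f (π u) := fun u hu => by
    obtain ⟨b, -, hb⟩ := Finset.mem_image.1 (himage ▸ Finset.mem_range.2 hu)
    obtain ⟨u', rfl, hu'⟩ := hf_mem b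
    rw [← hinj (hu'.trans hb)]
    exact hu'
  obtain ⟨u, rfl, hu⟩ := hf_mem b
  refine ⟨u, ⟨hu ▸ hf_lt _, rfl⟩, fun u' ⟨hu'lt, hu'b⟩ => hinj ?_⟩
  rw [hlevel u' hu'lt, hu'b, hu]

end NFA

namespace DFA

variable {α σ₁ σ₂ : Type*} [Fintype σ₁] [Fintype σ₂] {M₁ : DFA α σ₁} {M₂ : DFA α σ₂}

theorem exists_dist_lt_card_eq_start_mem_accept
    (hne : (M₁.plusNFA.inter M₂.plusNFA).accepts.Nonempty)
    (hlong : ∀ x ∈ (M₁.plusNFA.inter M₂.plusNFA).accepts,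
      Fintype.card (σ₁ × σ₂) - 1 ≤ x.length)
    (hs₂ : M₂.start ∉ M₂.accept) :
    ∃ u, (M₁.plusNFA.inter M₂.plusNFA).dist u < Fintype.card σ₂ ∧
      u.1 = M₁.start ∧ u.2 ∈ M₂.accept := by
  set P := M₁.plusNFA.inter M₂.plusNFA
  obtain ⟨hreach, hinj, hrange⟩ := NFA.reachable_injective_range_dist hne hlong
  obtain ⟨x, f, hf, -⟩ := hne
  have hf₂ : f.2 ∈ M₂.accept := hf.2
  have : Nonempty σ₁ := ⟨M₁.start⟩
  have hcol := NFA.existsUnique_dist_lt_card_fiber (N := P) (π := Prod.snd) Prod.snd_surjective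
    (fun u a v t hv ht => ⟨(M₁.step t.1 a, v.2), ⟨Or.inl rfl, ht ▸ hv.2⟩, rfl⟩) hreach hinj
  obtain ⟨u, ⟨hu, hu₂⟩, -⟩ := hcol f.2
  set w : σ₁ × σ₂ := (u.1, M₂.start)
  have hw : P.dist w + 1 < Fintype.card (σ₁ × σ₂) := by
    refine lt_of_le_of_ne (hrange.subset ⟨w, rfl⟩) fun h => hs₂ ?_
    have hfw : f = w := hinj <| by
      have := hrange.subset ⟨f, rfl⟩
      have := NFA.le_dist_of_mem_accept hlong (hreach f) hf
      simp only [Set.mem_Iio] at *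
      omega
    rw [hfw] at hf₂
    exact hf₂
  obtain ⟨y, hy⟩ := hrange.superset hw
  obtain ⟨v, a, hv, hyv⟩ := (hreach y).exists_step_of_dist_eq_succ hy
  rw [hinj hv] at hyv
  -- `u.2` is accepting, so `M₂` may restart from it: `u` has every successor of `w`.
  have hyu : y ∈ P.step u a := ⟨hyv.1, plusNFA_step_start_subset (hu₂ ▸ hf₂) a hyv.2⟩
  have hwu := NFA.dist_le_dist_add_one (hreach u) hyu
  have hstart : P.dist (M₁.start, M₂.start) = 0 := NFA.dist_eq_zero_of_mem_start ⟨rfl, rfl⟩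
  have hw₀ : w = (M₁.start, M₂.start) :=
    (hcol M₂.start).unique ⟨by omega, rfl⟩ ⟨by omega, rfl⟩
  exact ⟨u, hu, congrArg Prod.fst hw₀, hu₂ ▸ hf₂⟩

theorem start_mem_accept_or_card_lt_of_le_length (M₁ : DFA α σ₁) (M₂ : DFA α σ₂)
    (hm : 2 ≤ Fintype.card σ₁)
    (hne : ∃ x, x ∈ posClosure M₁.accepts ∧ x ∈ posClosure M₂.accepts)
    (hlong : ∀ x, x ∈ posClosure M₁.accepts → x ∈ posClosure M₂.accepts →
      Fintype.card σ₁ * Fintype.card σ₂ - 1 ≤ x.length) :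
    M₂.start ∈ M₂.accept ∨ (M₁.start ∉ M₁.accept ∧ Fintype.card σ₁ < Fintype.card σ₂) := by
  set P := M₁.plusNFA.inter M₂.plusNFA
  have hP : P.accepts = posClosure M₁.accepts ⊓ posClosure M₂.accepts := by
    rw [NFA.accepts_inter, accepts_plusNFA, accepts_plusNFA]
  have hcard := Fintype.card_prod σ₁ σ₂
  have hne' : P.accepts.Nonempty := hP ▸ hne
  have hlong' : ∀ x ∈ P.accepts, Fintype.card (σ₁ × σ₂) - 1 ≤ x.length := fun x hx => by
    rw [hP] at hx
    exact hcard ▸ hlong x hx.1 hx.2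
  refine or_iff_not_imp_left.2 fun hs₂ => ?_
  obtain ⟨u, hu, hu₁, hu₂⟩ : ∃ u, P.dist u < Fintype.card σ₂ ∧ u.1 = M₁.start ∧ u.2 ∈ M₂.accept :=
    exists_dist_lt_card_eq_start_mem_accept hne' hlong' hs₂
  obtain ⟨hreach, hinj, -⟩ := NFA.reachable_injective_range_dist hne' hlong'
  constructor
  · intro hs₁
    have := NFA.le_dist_of_mem_accept hlong' (hreach u) ⟨hu₁ ▸ hs₁, hu₂⟩
    have : 2 * Fintype.card σ₂ ≤ Fintype.card σ₁ * Fintype.card σ₂ := Nat.mul_le_mul_right _ hm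
    omega
  · by_contra! hnm
    have : Nonempty σ₂ := ⟨M₂.start⟩
    have hrow := NFA.existsUnique_dist_lt_card_fiber (N := P) (π := Prod.fst)
      Prod.fst_surjective
      (fun u a v t hv ht => ⟨(v.1, M₂.step t.2 a), ⟨ht ▸ hv.1, Or.inl rfl⟩, rfl⟩) hreach hinj
    have hstart : P.dist (M₁.start, M₂.start) = 0 := NFA.dist_eq_zero_of_mem_start ⟨rfl, rfl⟩
    have hu₀ : u = (M₁.start, M₂.start) :=
      (hrow M₁.start).unique ⟨by omega, hu₁⟩ ⟨by omega, rfl⟩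
    rw [hu₀] at hu₂
    exact hs₂ hu₂

end DFA

/-- For DFAs `M₁`, `M₂` with `m, n ≥ 2` states, if `L(M₁)⁺ ∩ L(M₂)⁺` is
nonempty then it contains a string of length strictly less than `m·n − 1`. -/
theorem dfa_posClosure_intersection_shortest_string {α σ₁ σ₂ : Type*}
    [Fintype σ₁] [Fintype σ₂] (M₁ : DFA α σ₁) (M₂ : DFA α σ₂)
    (hm : 2 ≤ Fintype.card σ₁) (hn : 2 ≤ Fintype.card σ₂)
    (h : ∃ x, x ∈ posClosure M₁.accepts ∧ x ∈ posClosure M₂.accepts) :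
    ∃ x, x ∈ posClosure M₁.accepts ∧ x ∈ posClosure M₂.accepts ∧
      x.length < Fintype.card σ₁ * Fintype.card σ₂ - 1 := by
  by_contra! hlong
  have h₁₂ := DFA.start_mem_accept_or_card_lt_of_le_length M₁ M₂ hm h hlong
  have h₂₁ := DFA.start_mem_accept_or_card_lt_of_le_length M₂ M₁ hn
    (h.imp fun _ => And.symm) fun x hx₂ hx₁ => Nat.mul_comm .. ▸ hlong x hx₁ hx₂
  have hboth : ¬ (M₁.start ∈ M₁.accept ∧ M₂.start ∈ M₂.accept) := fun ⟨hs₁, hs₂⟩ => by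
    have hnil :=
      hlong [] ⟨1, le_rfl, by rw [pow_one]; exact hs₁⟩ ⟨1, le_rfl, by rw [pow_one]; exact hs₂⟩
    have := Nat.mul_le_mul hm hn
    simp only [List.length_nil] at hnil
    omega
  rcases h₁₂ with hs₂ | ⟨hs₁, hlt⟩ <;> rcases h₂₁ with hs₁' | ⟨hs₂', hlt'⟩
  exacts [hboth ⟨hs₁', hs₂⟩, hs₂' hs₂, hs₁ hs₁', by omega]
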